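/- arXiv:0912.1902 — 3 statements merged into one kernel-verified Lean document; each statement's English description precedes it below -/
import Mathlib

section
/- Let A be an n×n labeled transition matrix (whose entries do not contain τ), S a boolean n×n matrix of silent steps, ρ a boolean termination vector, V a surjective boolean n×N collector, and Π = S* the reflexive-transitive closure of S. Put R = VVᵀ. If the weak-bisimulation conditions VVᵀΠV = ΠV, VVᵀΠAΠV = ΠAΠV, and VVᵀΠρ = Πρ hold, then RS ≤ ΠR, RA ≤ ΠAΠR, and Rρ ≤ Πρ. -/
open Matrix

instance : CommSemiring Prop where
  add a b := a ∨ b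
  add_assoc a b c := propext or_assoc
  zero := False
  zero_add a := false_or a
  add_zero a := or_false a
  add_comm a b := propext or_comm
  nsmul n p := n ≠ 0 ∧ p
  nsmul_zero p := by show ((0:ℕ) ≠ 0 ∧ p) = False; simp
  nsmul_succ n p := by
    show ((n + 1 : ℕ) ≠ 0 ∧ p) = ((n ≠ 0 ∧ p) ∨ p)
    by_cases h : n = 0 <;> simp [h]
  mul a b := a ∧ b
  mul_assoc a b c := propext and_assoc
  one := True
  one_mul a := true_and a
  mul_one a := and_true a
  left_distrib a b c := propext and_or_left
  right_distrib a b c := propext or_and_right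
  zero_mul a := false_and a
  mul_zero a := and_false a
  mul_comm a b := propext and_comm

instance {α : Type*} : CommSemiring (Set α) where
  add a b := a ∪ b
  add_assoc := Set.union_assoc
  zero := (∅ : Set α)
  zero_add := Set.empty_union
  add_zero := Set.union_empty
  add_comm := Set.union_comm
  nsmul n s := {x ∈ s | n ≠ 0}
  nsmul_zero s := by show {x ∈ s | (0:ℕ) ≠ 0} = (∅ : Set α); simp
  nsmul_succ n s := by
    show {x ∈ s | (n + 1 : ℕ) ≠ 0} = {x ∈ s | n ≠ 0} ∪ s
    by_cases h : n = 0 <;> ext x <;> simp [h]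
  mul a b := a ∩ b
  mul_assoc := Set.inter_assoc
  one := (Set.univ : Set α)
  one_mul := Set.univ_inter
  mul_one := Set.inter_univ
  left_distrib := Set.inter_union_distrib_left
  right_distrib := Set.union_inter_distrib_right
  zero_mul := Set.empty_inter
  mul_zero := Set.inter_empty
  mul_comm := Set.inter_comm

/-- Embedding of boolean matrices into `Set 𝒜`-labeled matrices:
a `True` entry becomes the full action set, a `False` entry the empty set. -/
def emb (𝒜 : Type*) {m p : Type*} (M : Matrix m p Prop) : Matrix m p (Set 𝒜) :=
  Matrix.of fun i j => {_a : 𝒜 | M i j}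

/-- Reflexive-transitive closure `S* = Σ_{k ≥ 0} S^k` of a boolean matrix. -/
def mstar {n : ℕ} (S : Matrix (Fin n) (Fin n) Prop) : Matrix (Fin n) (Fin n) Prop :=
  Matrix.of fun i j => ∃ k : ℕ, (S ^ k) i j

/-!
Every row of the collector `V` contains a `1`, so `M ≤ M V Vᵀ` for every matrix `M`; and
`Π = S*` is reflexive and contains `S`. Hence
`RS ≤ RΠ ≤ RΠVVᵀ = (VVᵀΠV)Vᵀ = ΠVVᵀ = ΠR`, and in the same way
`RA ≤ RΠAΠVVᵀ = ΠAΠVVᵀ = ΠAΠR` and `Rρ ≤ RΠρ = Πρ`.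
-/

section

variable {ι α : Type*}

theorem prop_sum_iff (s : Finset ι) (f : ι → Prop) : (∑ k ∈ s, f k) ↔ ∃ k ∈ s, f k := by
  classical
  induction s using Finset.induction_on with
  | empty => exact ⟨False.elim, by simp⟩
  | insert k s hk ih =>
    rw [Finset.sum_insert hk]
    show f k ∨ _ ↔ _
    rw [ih, Finset.exists_mem_insert]

theorem mem_set_sum_iff (a : α) (s : Finset ι) (f : ι → Set α) :
    a ∈ (∑ k ∈ s, f k) ↔ ∃ k ∈ s, a ∈ f k := by
  classical
  induction s using Finset.induction_on with
  | empty => exact ⟨False.elim, by simp⟩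
  | insert k s hk ih =>
    rw [Finset.sum_insert hk]
    show a ∈ f k ∪ _ ↔ _
    rw [Set.mem_union, ih, Finset.exists_mem_insert]

end

section

variable {l m n : Type*} [Fintype m] {𝒜 : Type*}

theorem prop_mul_apply_iff (M : Matrix l m Prop) (N : Matrix m n Prop) (i : l) (j : n) :
    (M * N) i j ↔ ∃ k, M i k ∧ N k j := by
  simp only [Matrix.mul_apply, prop_sum_iff, Finset.mem_univ, true_and]
  rfl

theorem mem_set_mul_apply_iff (M : Matrix l m (Set 𝒜)) (N : Matrix m n (Set 𝒜)) (i : l) (j : n)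
    (a : 𝒜) : a ∈ (M * N) i j ↔ ∃ k, a ∈ M i k ∧ a ∈ N k j := by
  simp only [Matrix.mul_apply, mem_set_sum_iff, Finset.mem_univ, true_and]
  rfl

@[simp]
theorem mem_emb_apply (M : Matrix l n Prop) (i : l) (j : n) (a : 𝒜) : a ∈ emb 𝒜 M i j ↔ M i j :=
  Iff.rfl

theorem emb_mul (M : Matrix l m Prop) (N : Matrix m n Prop) :
    emb 𝒜 (M * N) = emb 𝒜 M * emb 𝒜 N := by
  ext i j a
  simp only [mem_emb_apply, prop_mul_apply_iff, mem_set_mul_apply_iff]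

theorem prop_mul_apply_mono_right {M : Matrix l m Prop} {N N' : Matrix m n Prop}
    (h : ∀ k j, N k j → N' k j) {i : l} {j : n} (hMN : (M * N) i j) : (M * N') i j := by
  obtain ⟨k, hik, hkj⟩ := (prop_mul_apply_iff M N i j).mp hMN
  exact (prop_mul_apply_iff M N' i j).mpr ⟨k, hik, h k j hkj⟩

theorem mem_set_mul_apply_mono_right {M : Matrix l m (Set 𝒜)} {N N' : Matrix m n (Set 𝒜)}
    (h : ∀ k j, N k j ⊆ N' k j) {i : l} {j : n} {a : 𝒜} (hMN : a ∈ (M * N) i j) :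
    a ∈ (M * N') i j := by
  obtain ⟨k, hik, hkj⟩ := (mem_set_mul_apply_iff M N i j a).mp hMN
  exact (mem_set_mul_apply_iff M N' i j a).mpr ⟨k, hik, h k j hkj⟩

theorem prop_apply_imp_mul_mul_transpose [Fintype n] {V : Matrix m n Prop}
    (hV : ∀ j, ∃ k, V j k) {X : Matrix l m Prop} {i : l} {j : m} (hX : X i j) :
    (X * V * Vᵀ) i j := by
  obtain ⟨k, hjk⟩ := hV j
  exact (prop_mul_apply_iff _ _ i j).mpr
    ⟨k, (prop_mul_apply_iff X V i k).mpr ⟨j, hX, hjk⟩, hjk⟩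

theorem mem_mul_emb_mul_emb_transpose [Fintype n] {V : Matrix m n Prop}
    (hV : ∀ j, ∃ k, V j k) {X : Matrix l m (Set 𝒜)} {i : l} {j : m} {a : 𝒜} (hX : a ∈ X i j) :
    a ∈ (X * emb 𝒜 V * emb 𝒜 Vᵀ) i j := by
  obtain ⟨k, hjk⟩ := hV j
  exact (mem_set_mul_apply_iff _ _ i j a).mpr
    ⟨k, (mem_set_mul_apply_iff _ _ i k a).mpr ⟨j, hX, hjk⟩, hjk⟩

theorem prop_mul_apply_of_refl {P : Matrix m m Prop} (hP : ∀ i, P i i)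
    {M : Matrix m n Prop} {i : m} {j : n} (hM : M i j) : (P * M) i j :=
  (prop_mul_apply_iff P M i j).mpr ⟨i, hP i, hM⟩

theorem mem_emb_mul_mul_emb_of_refl {P : Matrix m m Prop} (hP : ∀ i, P i i)
    {A : Matrix m m (Set 𝒜)} {i j : m} {a : 𝒜} (hA : a ∈ A i j) :
    a ∈ (emb 𝒜 P * A * emb 𝒜 P) i j :=
  (mem_set_mul_apply_iff _ _ i j a).mpr
    ⟨j, (mem_set_mul_apply_iff _ _ i j a).mpr ⟨i, hP i, hA⟩, hP j⟩

end

section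

variable {n : ℕ} (S : Matrix (Fin n) (Fin n) Prop)

theorem mstar_apply_self (i : Fin n) : mstar S i i :=
  ⟨0, by rw [pow_zero, Matrix.one_apply_eq]; trivial⟩

theorem mstar_apply_of_apply {i j : Fin n} (h : S i j) : mstar S i j :=
  ⟨1, by rwa [pow_one]⟩

end

theorem weak_bisim_implies_simulation_general {n N : ℕ} {𝒜 : Type*}
    (A : Matrix (Fin n) (Fin n) (Set 𝒜))
    (S : Matrix (Fin n) (Fin n) Prop) (ρ : Matrix (Fin n) (Fin 1) Prop)
    (V : Matrix (Fin n) (Fin N) Prop)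
    (hcol : ∀ i, ∃! j, V i j)
    (Pi : Matrix (Fin n) (Fin n) Prop) (hPi : Pi = mstar S)
    (R : Matrix (Fin n) (Fin n) Prop) (hR : R = V * Vᵀ)
    (h₁ : V * Vᵀ * Pi * V = Pi * V)
    (h₂ : emb 𝒜 V * emb 𝒜 Vᵀ * emb 𝒜 Pi * A * emb 𝒜 Pi * emb 𝒜 V =
      emb 𝒜 Pi * A * emb 𝒜 Pi * emb 𝒜 V)
    (h₃ : V * Vᵀ * Pi * ρ = Pi * ρ) :
    (∀ i j, (R * S) i j ≤ (Pi * R) i j) ∧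
    (∀ i j, (emb 𝒜 R * A) i j ≤ (emb 𝒜 Pi * A * emb 𝒜 Pi * emb 𝒜 R) i j) ∧
    (∀ i j, (R * ρ) i j ≤ (Pi * ρ) i j) := by
  subst hPi hR
  have hV : ∀ i, ∃ j, V i j := fun i => (hcol i).exists
  refine ⟨fun i j hRS => ?_, fun i j a hRA => ?_, fun i j hRρ => ?_⟩
  · have hRPi := prop_mul_apply_mono_right (fun _ _ => mstar_apply_of_apply S) hRS
    have hRPiVVt := prop_apply_imp_mul_mul_transpose hV hRPi
    rwa [h₁, Matrix.mul_assoc] at hRPiVVt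
  · rw [emb_mul] at hRA ⊢
    have hRPiAPi := mem_set_mul_apply_mono_right
      (fun _ _ _ => mem_emb_mul_mul_emb_of_refl (mstar_apply_self S)) hRA
    simpa only [← Matrix.mul_assoc, h₂] using mem_mul_emb_mul_emb_transpose hV hRPiAPi
  · have hRPiρ :=
      prop_mul_apply_mono_right (fun _ _ => prop_mul_apply_of_refl (mstar_apply_self S)) hRρ
    rwa [← Matrix.mul_assoc, h₃] at hRPiρ

/-- the weak-bisimulation matrix conditions imply the simulation-style
conditions `RS ≤ PiR`, `RA ≤ PiAPiR` and `Rρ ≤ Piρ` for `R = VVᵀ` and `Pi = S*`. -/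
theorem weak_bisim_implies_simulation {n N : ℕ} {𝒜 : Type*} (τ : 𝒜)
    (A : Matrix (Fin n) (Fin n) (Set 𝒜)) (hA : ∀ i j, τ ∉ A i j)
    (S : Matrix (Fin n) (Fin n) Prop) (ρ : Matrix (Fin n) (Fin 1) Prop)
    (V : Matrix (Fin n) (Fin N) Prop)
    (hcol : ∀ i, ∃! j, V i j) (hsurj : ∀ j, ∃ i, V i j)
    (Pi : Matrix (Fin n) (Fin n) Prop) (hPi : Pi = mstar S)
    (R : Matrix (Fin n) (Fin n) Prop) (hR : R = V * Vᵀ)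
    (h₁ : V * Vᵀ * Pi * V = Pi * V)
    (h₂ : emb 𝒜 V * emb 𝒜 Vᵀ * emb 𝒜 Pi * A * emb 𝒜 Pi * emb 𝒜 V =
      emb 𝒜 Pi * A * emb 𝒜 Pi * emb 𝒜 V)
    (h₃ : V * Vᵀ * Pi * ρ = Pi * ρ) :
    (∀ i j, (R * S) i j ≤ (Pi * R) i j) ∧
    (∀ i j, (emb 𝒜 R * A) i j ≤ (emb 𝒜 Pi * A * emb 𝒜 Pi * emb 𝒜 R) i j) ∧
    (∀ i j, (R * ρ) i j ≤ (Pi * ρ) i j) :=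
  weak_bisim_implies_simulation_general A S ρ V hcol Pi hPi R hR h₁ h₂ h₃
end

section
/- Let S be a boolean n×n matrix, V a surjective boolean n×N collector, and Π = S* the reflexive-transitive closure of S. If VVᵀΠV = ΠV, then ΠVVᵀ = ΠVVᵀΠ. -/
open Matrix

/-!
Write `Π = S*`. Since `Π` is reflexive, `ΠVVᵀ ≤ ΠVVᵀΠ`. Conversely, every row of `V` has a `1`,
so `I ≤ VVᵀ`, and therefore
`ΠVVᵀΠ ≤ ΠVVᵀΠVVᵀ = Π(VVᵀΠV)Vᵀ = Π(ΠV)Vᵀ = ΠVVᵀ`, using the hypothesis and `ΠΠ = Π`.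
-/

theorem Prop.sum_eq_exists {α : Type*} (s : Finset α) (f : α → Prop) :
    ∑ a ∈ s, f a = ∃ a ∈ s, f a := by
  classical
  induction s using Finset.induction_on with
  | empty => exact propext ⟨False.elim, fun ⟨_, ha, _⟩ => absurd ha (Finset.notMem_empty _)⟩
  | insert a s ha ih =>
    rw [Finset.sum_insert ha, ih]
    exact propext (by simp only [Finset.mem_insert, exists_eq_or_imp]; rfl)

namespace Matrix

variable {l m n o : Type*}

instance : PartialOrder (Matrix m n Prop) := inferInstanceAs (PartialOrder (m → n → Prop))

theorem prop_one_apply [DecidableEq n] (i j : n) : (1 : Matrix n n Prop) i j = (i = j) := by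
  by_cases hij : i = j
  · subst hij; exact (one_apply_eq i).trans (propext ⟨fun _ => rfl, fun _ => trivial⟩)
  · exact (one_apply_ne hij).trans (propext ⟨False.elim, hij⟩)

theorem prop_mul_apply [Fintype m] (A : Matrix l m Prop) (B : Matrix m o Prop) (i : l) (k : o) :
    (A * B) i k = ∃ j, A i j ∧ B j k := by
  rw [mul_apply, Prop.sum_eq_exists]
  exact propext ⟨fun ⟨j, _, hj⟩ => ⟨j, hj⟩, fun ⟨j, hj⟩ => ⟨j, Finset.mem_univ j, hj⟩⟩

theorem prop_mul_le_mul [Fintype m] {A A' : Matrix l m Prop} {B B' : Matrix m o Prop}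
    (hA : A ≤ A') (hB : B ≤ B') : A * B ≤ A' * B' := by
  intro i k
  simp only [prop_mul_apply]
  exact fun ⟨j, hij, hjk⟩ => ⟨j, hA i j hij, hB j k hjk⟩

theorem one_le_mul_transpose_of_total [DecidableEq m] [Fintype n] {V : Matrix m n Prop}
    (hV : ∀ i, ∃ j, V i j) : 1 ≤ V * Vᵀ := by
  intro i i' hii'
  rw [prop_one_apply] at hii'
  subst hii'
  obtain ⟨j, hj⟩ := hV i
  rw [prop_mul_apply]
  exact ⟨j, hj, hj⟩

end Matrix

open Matrix

section mstar

variable {n : ℕ} (S : Matrix (Fin n) (Fin n) Prop)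

theorem one_le_mstar : 1 ≤ mstar S :=
  fun _ _ hij => ⟨0, by rwa [pow_zero]⟩

theorem mstar_mul_mstar_le : mstar S * mstar S ≤ mstar S := by
  intro i k
  rw [prop_mul_apply]
  rintro ⟨j, ⟨a, hij⟩, ⟨b, hjk⟩⟩
  refine ⟨a + b, ?_⟩
  rw [pow_add, prop_mul_apply]
  exact ⟨j, hij, hjk⟩

theorem mstar_mul_mstar : mstar S * mstar S = mstar S :=
  le_antisymm (mstar_mul_mstar_le S)
    (calc mstar S = mstar S * 1 := (Matrix.mul_one _).symm
      _ ≤ mstar S * mstar S := prop_mul_le_mul le_rfl (one_le_mstar S))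

end mstar

theorem pi_V_Vt_absorbs_pi_general {n N : ℕ}
    (S : Matrix (Fin n) (Fin n) Prop) (V : Matrix (Fin n) (Fin N) Prop)
    (hcol : ∀ i, ∃! j, V i j)
    (h : V * Vᵀ * mstar S * V = mstar S * V) :
    mstar S * V * Vᵀ = mstar S * V * Vᵀ * mstar S := by
  set P := mstar S
  have hVVt : 1 ≤ V * Vᵀ := one_le_mul_transpose_of_total fun i => (hcol i).exists
  apply le_antisymm
  · calc P * V * Vᵀ = P * V * Vᵀ * 1 := (Matrix.mul_one _).symm
      _ ≤ P * V * Vᵀ * P := prop_mul_le_mul le_rfl (one_le_mstar S)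
  · calc P * V * Vᵀ * P = P * V * Vᵀ * P * 1 := (Matrix.mul_one _).symm
      _ ≤ P * V * Vᵀ * P * (V * Vᵀ) := prop_mul_le_mul le_rfl hVVt
      _ = P * (V * Vᵀ * P * V) * Vᵀ := by simp only [Matrix.mul_assoc]
      _ = P * V * Vᵀ := by rw [h, ← Matrix.mul_assoc P P, mstar_mul_mstar]

/-- if `VVᵀΠV = ΠV` for `Π = S*`, then `ΠVVᵀ = ΠVVᵀΠ`. -/
theorem pi_V_Vt_absorbs_pi {n N : ℕ}
    (S : Matrix (Fin n) (Fin n) Prop) (V : Matrix (Fin n) (Fin N) Prop)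
    (hcol : ∀ i, ∃! j, V i j) (hsurj : ∀ j, ∃ i, V i j)
    (h : V * Vᵀ * mstar S * V = mstar S * V) :
    mstar S * V * Vᵀ = mstar S * V * Vᵀ * mstar S :=
  pi_V_Vt_absorbs_pi_general S V hcol h
end

section
/- Let (σ, Q, ρ) with σ ∈ ℝ^{1×n}, Q ∈ ℝ^{n×n}, ρ ∈ ℝ^{n×1}, let V ∈ ℝ^{n×N} be a collector matrix and U ∈ ℝ^{N×n} a distributor for V. If VUQV = QV and VUρ = ρ (V is a strong bisimulation / ordinary lumping), then the total reward rate is preserved: for every t ∈ ℝ, σ·exp(tQ)·ρ = (σV)·exp(t·UQV)·(Uρ). -/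
open Matrix

/-- The all-ones real column vector. -/
def onesR (n : ℕ) : Matrix (Fin n) (Fin 1) ℝ := Matrix.of fun _ _ => 1

/-- A real matrix is a collector if every entry is 0 or 1 and every row
contains exactly one 1. -/
def IsCollectorR {n N : ℕ} (V : Matrix (Fin n) (Fin N) ℝ) : Prop :=
  (∀ i j, V i j = 0 ∨ V i j = 1) ∧ ∀ i, ∃! j, V i j = 1

/-!
The lumping condition `V U Q V = Q V` says exactly that `Q` intertwines the collector:
`Q V = V (U Q V)`. Intertwining passes to powers and hence, term by term, to the exponential
series, so `exp (t Q) V = V exp (t U Q V)`. Writing `ρ = V (U ρ)` and moving `V` across the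
exponential then turns `σ exp (t Q) ρ` into `(σ V) exp (t U Q V) (U ρ)`.
-/

open NormedSpace

namespace Matrix

variable {m n 𝕂 : Type*} [Fintype m] [DecidableEq m] [Fintype n] [DecidableEq n]

theorem pow_mul_eq_mul_pow_of_mul_eq_mul [Semiring 𝕂] {A : Matrix m m 𝕂} {B : Matrix n n 𝕂}
    {V : Matrix m n 𝕂} (h : A * V = V * B) (k : ℕ) : A ^ k * V = V * B ^ k := by
  induction k with
  | zero => simp
  | succ k ih =>
    rw [pow_succ, pow_succ, Matrix.mul_assoc, h, ← Matrix.mul_assoc, ih, Matrix.mul_assoc]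

theorem exp_mul_eq_mul_exp_of_mul_eq_mul [RCLike 𝕂] {A : Matrix m m 𝕂} {B : Matrix n n 𝕂}
    {V : Matrix m n 𝕂} (h : A * V = V * B) : exp A * V = V * exp B := by
  have hA : HasSum (fun k => (k.factorial⁻¹ : 𝕂) • A ^ k) (exp A) := by
    open scoped Norms.Operator in exact exp_series_hasSum_exp' A
  have hB : HasSum (fun k => (k.factorial⁻¹ : 𝕂) • B ^ k) (exp B) := by
    open scoped Norms.Operator in exact exp_series_hasSum_exp' B
  refine (hA.map (addMonoidHomMulRight V) (continuous_id.matrix_mul continuous_const)).unique ?_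
  simpa [Function.comp_def, Matrix.smul_mul, Matrix.mul_smul,
    pow_mul_eq_mul_pow_of_mul_eq_mul h] using
    hB.map (addMonoidHomMulLeft V) (continuous_const.matrix_mul continuous_id)

end Matrix

theorem mrc_lumping_preserves_total_reward_general {n N : ℕ}
    (σ : Matrix (Fin 1) (Fin n) ℝ) (Q : Matrix (Fin n) (Fin n) ℝ)
    (ρ : Matrix (Fin n) (Fin 1) ℝ)
    (V : Matrix (Fin n) (Fin N) ℝ) (U : Matrix (Fin N) (Fin n) ℝ)
    (hQ : V * U * Q * V = Q * V) (hρ : V * U * ρ = ρ) :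
    ∀ t : ℝ, σ * NormedSpace.exp (t • Q) * ρ =
      (σ * V) * NormedSpace.exp (t • (U * Q * V)) * (U * ρ) := by
  intro t
  have hintertwine : t • Q * V = V * (t • (U * Q * V)) := by
    rw [Matrix.smul_mul, Matrix.mul_smul, ← hQ]
    simp only [Matrix.mul_assoc]
  calc σ * exp (t • Q) * ρ
      = σ * (exp (t • Q) * V) * (U * ρ) := by
        nth_rewrite 1 [← hρ]
        simp only [Matrix.mul_assoc]
    _ = (σ * V) * exp (t • (U * Q * V)) * (U * ρ) := by
        rw [exp_mul_eq_mul_exp_of_mul_eq_mul hintertwine]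
        simp only [Matrix.mul_assoc]

/-- ordinary lumping preserves the total reward rate
`R(t) = σ·exp(tQ)·ρ`. -/
theorem mrc_lumping_preserves_total_reward {n N : ℕ}
    (σ : Matrix (Fin 1) (Fin n) ℝ) (Q : Matrix (Fin n) (Fin n) ℝ)
    (ρ : Matrix (Fin n) (Fin 1) ℝ)
    (V : Matrix (Fin n) (Fin N) ℝ) (U : Matrix (Fin N) (Fin n) ℝ)
    (hV : IsCollectorR V)
    (hU₁ : U * onesR n = onesR N) (hU₂ : U * V = 1)
    (hQ : V * U * Q * V = Q * V) (hρ : V * U * ρ = ρ) :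
    ∀ t : ℝ, σ * NormedSpace.exp (t • Q) * ρ =
      (σ * V) * NormedSpace.exp (t • (U * Q * V)) * (U * ρ) :=
  mrc_lumping_preserves_total_reward_general σ Q ρ V U hQ hρ
end
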